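/- Every natural number M > 1 has a unique representation as a tower exponentiation of a nonempty list of biprime numbers: such a list exists and any two such lists are equal. -/

import Mathlib

/-!
Existence: every `M > 1` is a power `a ^ k` of a biprime `a` (descend along `M = a ^ b` until the
base is biprime), and the exponent `k < M` is again `1` or a tower, by strong induction.

Uniqueness reduces, peeling off the base, to: `a ^ m = b ^ n` with `a`, `b` biprime forces
`a = b` and `m = n`. Dividing the exponents by `g = gcd m n` gives `a ^ m' = b ^ n'` with coprime
`m'`, `n'`, hence `a = c ^ n'` and `b = c ^ m'` for some `c`; biprimality forces `m' = n' = 1`.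
-/

def Biprime (n : ℕ) : Prop := 1 < n ∧ ¬ ∃ a b : ℕ, 1 < a ∧ 1 < b ∧ a ^ b = n

def tower : List ℕ → ℕ
  | [] => 1
  | a :: l => a ^ tower l

-- Solve in the group with zero `ℚ≥0` and take numerators.
theorem Nat.pow_eq_pow_iff_of_coprime {a b m n : ℕ} (hmn : m.Coprime n) :
    a ^ m = b ^ n ↔ ∃ c : ℕ, a = c ^ n ∧ b = c ^ m := by
  refine ⟨fun h => ?_, by rintro ⟨c, rfl, rfl⟩; rw [← pow_mul, ← pow_mul']⟩
  obtain ⟨c, ha, hb⟩ :=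
    (_root_.pow_eq_pow_iff_of_coprime hmn).1 (by exact_mod_cast h : (a : ℚ≥0) ^ m = (b : ℚ≥0) ^ n)
  exact ⟨c.num, by rw [← NNRat.num_natCast a, ha, NNRat.num_pow],
    by rw [← NNRat.num_natCast b, hb, NNRat.num_pow]⟩

namespace Biprime

theorem eq_one_of_pow_eq {a c k : ℕ} (ha : Biprime a) (h : c ^ k = a) : k = 1 := by
  obtain ⟨one_lt_a, not_pow⟩ := ha
  have one_lt_c : 1 < c := by
    by_contra! hc
    have : c ^ k ≤ 1 := pow_le_one' hc k
    omega
  rcases Nat.lt_trichotomy k 1 with hk | hk | hk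
  · obtain rfl : k = 0 := by omega
    simp [← h] at one_lt_a
  · exact hk
  · exact absurd ⟨c, k, one_lt_c, hk, h⟩ not_pow

theorem eq_and_eq_of_pow_eq_pow {a b m n : ℕ} (ha : Biprime a) (hb : Biprime b) (hm : m ≠ 0)
    (h : a ^ m = b ^ n) : a = b ∧ m = n := by
  obtain ⟨g, m', n', hg, hcop, rfl, rfl⟩ := Nat.exists_coprime' (Nat.gcd_pos_of_pos_left n
    (Nat.pos_of_ne_zero hm))
  rw [pow_mul, pow_mul] at h
  obtain ⟨c, rfl, rfl⟩ := (Nat.pow_eq_pow_iff_of_coprime hcop).1 (Nat.pow_left_injective hg.ne' h)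
  have hn' := ha.eq_one_of_pow_eq rfl
  have hm' := hb.eq_one_of_pow_eq rfl
  subst hn' hm'
  exact ⟨rfl, rfl⟩

theorem exists_pow_eq {M : ℕ} (hM : 1 < M) : ∃ a k, Biprime a ∧ 0 < k ∧ a ^ k = M := by
  induction M using Nat.strong_induction_on with
  | _ M ih =>
    by_cases hbp : Biprime M
    · exact ⟨M, 1, hbp, one_pos, pow_one M⟩
    · obtain ⟨a, b, ha, hb, rfl⟩ : ∃ a b : ℕ, 1 < a ∧ 1 < b ∧ a ^ b = M := by
        by_contra hc
        exact hbp ⟨hM, hc⟩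
      obtain ⟨c, k, hc, hk, rfl⟩ := ih a (lt_self_pow₀ ha hb) ha
      exact ⟨c, k * b, hc, by positivity, pow_mul c k b⟩

end Biprime

theorem tower_pos {l : List ℕ} (h : ∀ a ∈ l, 0 < a) : 0 < tower l := by
  induction l with
  | nil => exact Nat.one_pos
  | cons a l ih =>
    simp only [List.mem_cons, forall_eq_or_imp] at h
    exact pow_pos h.1 _

theorem one_lt_tower {l : List ℕ} (hl : l ≠ []) (h : ∀ a ∈ l, 1 < a) : 1 < tower l := by
  obtain ⟨a, l, rfl⟩ := List.exists_cons_of_ne_nil hl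
  simp only [List.mem_cons, forall_eq_or_imp] at h
  exact Nat.one_lt_pow (tower_pos fun x hx => by linarith [h.2 x hx]).ne' h.1

theorem tower_injOn_biprime : Set.InjOn tower {l | ∀ a ∈ l, Biprime a} := by
  intro l₁ h₁ l₂ h₂ heq
  induction l₁ generalizing l₂ with
  | nil =>
    by_contra hne
    exact (one_lt_tower (Ne.symm hne) fun a ha => (h₂ a ha).1).ne heq
  | cons a l₁ ih =>
    rcases l₂ with _ | ⟨b, l₂⟩
    · exact absurd heq (one_lt_tower (List.cons_ne_nil a l₁) fun x hx => (h₁ x hx).1).ne'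
    simp only [Set.mem_ofPred_eq, List.mem_cons, forall_eq_or_imp] at h₁ h₂
    have hpos : tower l₁ ≠ 0 := (tower_pos fun x hx => (h₁.2 x hx).1.trans' Nat.one_pos).ne'
    obtain ⟨rfl, htower⟩ := h₁.1.eq_and_eq_of_pow_eq_pow h₂.1 hpos heq
    rw [ih h₁.2 h₂.2 htower]

theorem exists_tower_eq {M : ℕ} (hM : 1 < M) :
    ∃ l : List ℕ, l ≠ [] ∧ (∀ a ∈ l, Biprime a) ∧ tower l = M := by
  induction M using Nat.strong_induction_on with
  | _ M ih =>
    obtain ⟨a, k, ha, hk, rfl⟩ := Biprime.exists_pow_eq hM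
    rcases (Nat.one_le_iff_ne_zero.2 hk.ne').eq_or_lt with rfl | hk
    · exact ⟨[a], List.cons_ne_nil a [], by simpa using ha, by simp [tower]⟩
    · obtain ⟨l, -, hl, rfl⟩ := ih _ (Nat.lt_pow_self ha.1) hk
      exact ⟨a :: l, List.cons_ne_nil a l, by simpa using ⟨ha, hl⟩, rfl⟩

theorem stmt4 (M : ℕ) (hM : 1 < M) :
    ∃! l : List ℕ, l ≠ [] ∧ (∀ a ∈ l, Biprime a) ∧ tower l = M := by
  obtain ⟨l, hl⟩ := exists_tower_eq hM
  exact ⟨l, hl, fun l' hl' => tower_injOn_biprime hl'.2.1 hl.2.1 (hl'.2.2.trans hl.2.2.symm)⟩
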